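/- arXiv:0910.2318 — 6 statements merged into one kernel-verified Lean document; each statement's English description precedes it below -/
import Mathlib

section
/- Let X be a Polish space and let I be a σ-ideal on X generated by closed sets. If G ⊆ X is a Gδ set whose closure is I-perfect, then G does not belong to I. -/
open Set

/-- A σ-ideal: closed under subsets and countable unions. -/
def SigmaIdeal {X : Type*} (I : Set (Set X)) : Prop :=
  (∀ A B : Set X, A ⊆ B → B ∈ I → A ∈ I) ∧
  ∀ f : ℕ → Set X, (∀ n, f n ∈ I) → (⋃ n, f n) ∈ I

/-- `I` is generated by closed sets: every member of `I` is contained in a countable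
union of closed sets belonging to `I`. -/
def GeneratedByClosedSets {X : Type*} [TopologicalSpace X] (I : Set (Set X)) : Prop :=
  ∀ A ∈ I, ∃ f : ℕ → Set X, (∀ n, IsClosed (f n) ∧ f n ∈ I) ∧ A ⊆ ⋃ n, f n

/-- `A` is `I`-perfect: nonempty, and for every open `U` the set `A ∩ U` is empty or
`I`-positive. -/
def IdealPerfect {X : Type*} [TopologicalSpace X] (I : Set (Set X)) (A : Set X) : Prop :=
  A.Nonempty ∧ ∀ U : Set X, IsOpen U → A ∩ U = ∅ ∨ A ∩ U ∉ I

/-!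
Inside the closure `C` of `G`, which is a Polish and hence Baire space, `G` is a dense `Gδ`
set and therefore not meagre. On the other hand, `I`-perfectness of `C` forces every closed
set in `I` to be nowhere dense in `C`, so every member of `I`, being covered by countably
many such sets, is meagre in `C`.
-/

section

variable {X : Type*} [TopologicalSpace X] {I : Set (Set X)} {A : Set X}

theorem IdealPerfect.interior_preimage_val_eq_empty
    (hI : ∀ s t : Set X, s ⊆ t → t ∈ I → s ∈ I) (hA : IdealPerfect I A)
    {S : Set X} (hS : S ∈ I) : interior ((↑) ⁻¹' S : Set A) = ∅ := by
  obtain ⟨V, hV, hVS⟩ := isOpen_induced_iff.mp (isOpen_interior (s := ((↑) ⁻¹' S : Set A)))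
  have hAV : A ∩ V = (↑) '' interior ((↑) ⁻¹' S : Set A) := by
    rw [← hVS, Subtype.image_preimage_coe]
  rcases hA.2 V hV with hempty | hpos
  · rwa [hAV, image_eq_empty] at hempty
  · refine absurd (hI _ _ ?_ hS) hpos
    rw [hAV]
    exact (image_mono interior_subset).trans (image_preimage_subset _ _)

theorem IdealPerfect.isMeagre_preimage_val
    (hI : ∀ s t : Set X, s ⊆ t → t ∈ I → s ∈ I) (hgen : GeneratedByClosedSets I)
    (hA : IdealPerfect I A) {S : Set X} (hS : S ∈ I) : IsMeagre ((↑) ⁻¹' S : Set A) := by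
  obtain ⟨F, hF, hSF⟩ := hgen S hS
  have hnowhere : ∀ n, IsNowhereDense ((↑) ⁻¹' F n : Set A) := fun n =>
    ((hF n).1.preimage continuous_subtype_val).isNowhereDense_iff.mpr
      (hA.interior_preimage_val_eq_empty hI (hF n).2)
  refine (isMeagre_iUnion fun n => (hnowhere n).isMeagre).mono ?_
  rw [← preimage_iUnion]
  exact preimage_mono hSF

theorem dense_preimage_val_closure (s : Set X) : Dense ((↑) ⁻¹' s : Set (closure s)) := by
  rw [Subtype.dense_iff, Subtype.image_preimage_coe, inter_eq_self_of_subset_right subset_closure]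

end

theorem gdelta_with_perfect_closure_not_in_ideal
    {X : Type*} [TopologicalSpace X] [PolishSpace X]
    (I : Set (Set X)) (hI : SigmaIdeal I) (hgen : GeneratedByClosedSets I)
    (G : Set X) (hG : IsGδ G) (hcl : IdealPerfect I (closure G)) :
    G ∉ I := by
  intro hGI
  have : PolishSpace (closure G) := isClosed_closure.polishSpace
  have : Nonempty (closure G) := hcl.1.to_subtype
  exact not_isMeagre_of_isGδ_of_dense (hG.preimage continuous_subtype_val)
    (dense_preimage_val_closure G) (hcl.isMeagre_preimage_val hI.1 hgen hGI)
end

section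
/- Let I and J be Π¹₁ on Σ¹₁ σ-ideals on Polish spaces X and Y, respectively. If A ⊆ X × Y is analytic and A ∈ I ⊗ J, then there exists an analytic set D ⊆ X × Y with A ∩ D = ∅ such that {x ∈ X : {y ∈ Y : (x,y) ∉ D} ∉ J} ∈ I (i.e., for I-almost all x, the section D_x is J-co-small). -/
/-!
Write `A = f '' (ℕ → ℕ)` with `f` continuous. To a point `z` attach the tree of finite sequences
`s` such that `z` lies in the closure of the image under `f` of the cylinder of `s`; it is
ill-founded iff `z ∈ A`. Compare trees by strictly monotone maps, which for well-founded trees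
compares their ranks. The pairs `(t, z)` such that the tree coded by `t` lies strictly below the
tree of `z` form an analytic set `B`, and `B_t = A` whenever `t` codes an ill-founded tree.
Since `I ⊗ J` is again Π¹₁ on Σ¹₁, the codes `t` with `B_t ∈ I ⊗ J` form a coanalytic set which
contains all codes of ill-founded trees; the codes of well-founded trees do not form an analytic
set, so some well-founded code `t` has `B_t ∈ I ⊗ J`. For such `t`, comparability of trees makes
the complement of `B_t` the analytic set `D` of points whose tree maps into the tree coded by
`t`, and `D` misses `A` because its points have well-founded trees.
-/

open Set

/-- A family of sets is Π¹₁ on Σ¹₁ if for every analytic `L ⊆ ω^ω × X` the set of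
parameters `t` whose section `L_t` belongs to the family is coanalytic. -/
def Pi11OnSigma11 {X : Type*} [TopologicalSpace X] (I : Set (Set X)) : Prop :=
  ∀ L : Set ((ℕ → ℕ) × X), MeasureTheory.AnalyticSet L →
    MeasureTheory.AnalyticSet {t : ℕ → ℕ | {x : X | (t, x) ∈ L} ∈ I}ᶜ

/-- The Fubini product of two σ-ideals. -/
def FubiniProd {X Y : Type*} (I : Set (Set X)) (J : Set (Set Y)) : Set (Set (X × Y)) :=
  {A | {x : X | {y : Y | (x, y) ∈ A} ∉ J} ∈ I}

open MeasureTheory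

lemma IsWellFounded.exists_rel_le_rank_of_lt_rank {α : Type*} {r : α → α → Prop}
    [IsWellFounded α r] {a : α} {o : Ordinal} (h : o < IsWellFounded.rank r a) :
    ∃ b, r b a ∧ o ≤ IsWellFounded.rank r b := by
  rw [IsWellFounded.rank_eq, Ordinal.lt_iSup_iff] at h
  obtain ⟨⟨b, hb⟩, h⟩ := h
  exact ⟨b, hb, Order.lt_succ_iff.1 h⟩

lemma MeasureTheory.AnalyticSet.inter {α : Type*} [TopologicalSpace α] [T2Space α]
    {s t : Set α} (hs : AnalyticSet s) (ht : AnalyticSet t) : AnalyticSet (s ∩ t) := by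
  rw [inter_eq_iInter]
  exact AnalyticSet.iInter (Bool.forall_bool.2 ⟨ht, hs⟩)

namespace Descriptive

def initSeg (b : ℕ → ℕ) (n : ℕ) : List ℕ := (List.range n).map b

@[simp] lemma initSeg_zero (b : ℕ → ℕ) : initSeg b 0 = [] := rfl

@[simp] lemma length_initSeg (b : ℕ → ℕ) (n : ℕ) : (initSeg b n).length = n := by
  simp [initSeg]

lemma initSeg_succ (b : ℕ → ℕ) (n : ℕ) : initSeg b (n + 1) = initSeg b n ++ [b n] := by
  simp [initSeg, List.range_succ]

lemma take_initSeg (b : ℕ → ℕ) {m n : ℕ} (h : m ≤ n) : (initSeg b n).take m = initSeg b m := by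
  simp [initSeg, ← List.map_take, List.take_range, min_eq_left h]

lemma initSeg_prefix_initSeg (b : ℕ → ℕ) {m n : ℕ} (h : m ≤ n) : initSeg b m <+: initSeg b n :=
  take_initSeg b h ▸ List.take_prefix _ _

lemma initSeg_eq_initSeg_iff {b c : ℕ → ℕ} {n : ℕ} :
    initSeg b n = initSeg c n ↔ ∀ i < n, b i = c i := by
  simp [initSeg, List.map_inj_left]

lemma map_initSeg (f : ℕ → ℕ) (c : ℕ → ℕ) (k : ℕ) :
    (initSeg c k).map f = initSeg (fun i => f (c i)) k := by
  simp [initSeg, Function.comp_def]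

lemma initSeg_succ' (c : ℕ → ℕ) (k : ℕ) :
    initSeg c (k + 1) = c 0 :: initSeg (fun i => c (i + 1)) k := by
  simp [initSeg, List.range_succ_eq_map, Function.comp_def]

lemma exists_initSeg_subset {b : ℕ → ℕ} {U : Set (ℕ → ℕ)} (hU : U ∈ nhds b) :
    ∃ n, {c | initSeg c n = initSeg b n} ⊆ U := by
  obtain ⟨V, hVU, hVo, hbV⟩ := mem_nhds_iff.1 hU
  obtain ⟨_, ⟨x, n, rfl⟩, hb, hsub⟩ :=
    (PiNat.isTopologicalBasis_cylinders fun _ => ℕ).exists_subset_of_mem_open hbV hVo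
  refine ⟨n, fun c hc => hVU (hsub ?_)⟩
  rw [← PiNat.mem_cylinder_iff_eq.1 hb]
  exact initSeg_eq_initSeg_iff.1 hc

def IsStrictPrefix {α : Type*} (s t : List α) : Prop := s <+: t ∧ s.length < t.length

section IsStrictPrefix

variable {α : Type*} {s t u : List α}

lemma IsStrictPrefix.trans (h₁ : IsStrictPrefix s t) (h₂ : IsStrictPrefix t u) :
    IsStrictPrefix s u :=
  ⟨h₁.1.trans h₂.1, h₁.2.trans h₂.2⟩

lemma IsStrictPrefix.ne_nil (h : IsStrictPrefix s t) : t ≠ [] := by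
  rintro rfl; simpa using h.2

lemma isStrictPrefix_nil_iff : IsStrictPrefix [] t ↔ t ≠ [] := by
  simp [IsStrictPrefix, List.length_pos_iff]

lemma isStrictPrefix_append_singleton (s : List α) (a : α) : IsStrictPrefix s (s ++ [a]) :=
  ⟨List.prefix_append _ _, by simp⟩

lemma isStrictPrefix_append_singleton_iff {a : α} :
    IsStrictPrefix s (t ++ [a]) ↔ s = t ∨ IsStrictPrefix s t := by
  constructor
  · rintro ⟨hp, hl⟩
    have hst : s <+: t :=
      List.prefix_of_prefix_length_le hp (List.prefix_append _ _) (by simpa using hl)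
    rcases hst.length_le.eq_or_lt with h | h
    · exact .inl (hst.eq_of_length h)
    · exact .inr ⟨hst, h⟩
  · rintro (rfl | h)
    · exact isStrictPrefix_append_singleton s a
    · exact h.trans (isStrictPrefix_append_singleton t a)

end IsStrictPrefix

lemma initSeg_isStrictPrefix_initSeg (b : ℕ → ℕ) {m n : ℕ} (h : m < n) :
    IsStrictPrefix (initSeg b m) (initSeg b n) :=
  ⟨initSeg_prefix_initSeg b h.le, by simpa using h⟩

def IllFounded (T : tree ℕ) : Prop := ∃ b : ℕ → ℕ, ∀ n, initSeg b n ∈ T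

lemma illFounded_of_chain {T : tree ℕ} (c : ℕ → List ℕ) (hc : ∀ n, c n ∈ T)
    (hch : ∀ n, IsStrictPrefix (c n) (c (n + 1))) : IllFounded T := by
  have hpre : ∀ {m n}, m ≤ n → c m <+: c n := by
    intro m n h
    induction n, h using Nat.le_induction with
    | base => exact List.prefix_rfl
    | succ n _ ih => exact ih.trans (hch n).1
  have hlen : ∀ n, n ≤ (c n).length := by
    intro n
    induction n with
    | zero => exact Nat.zero_le _
    | succ n ih => exact ih.trans_lt (hch n).2
  refine ⟨fun i => (c (i + 1)).getD i 0, fun k => Tree.mem_of_prefix ?_ (hc k)⟩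
  rw [List.prefix_iff_eq_take]
  refine List.ext_getElem (by simpa using hlen k) fun i hi _ => ?_
  have hik : i < k := by simpa using hi
  have hi' : i < (c (i + 1)).length := (Nat.lt_succ_self i).trans_le (hlen (i + 1))
  simp only [initSeg, List.getElem_map, List.getElem_range, List.getElem_take,
    List.getD_eq_getElem _ _ hi']
  exact (hpre hik).getElem hi'

def extRel (T : tree ℕ) (s t : List ℕ) : Prop := s ∈ T ∧ IsStrictPrefix t s

lemma wellFounded_extRel {T : tree ℕ} (hT : ¬ IllFounded T) : WellFounded (extRel T) :=
  wellFounded_iff_isEmpty_descending_chain.2 ⟨fun ⟨f, hf⟩ =>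
    hT (illFounded_of_chain (fun n => f (n + 1)) (fun n => (hf n).1) fun n => (hf (n + 1)).2)⟩

/-! ### Comparing trees -/

def IsTreeHom (F : List ℕ → List ℕ) (S T : Set (List ℕ)) : Prop :=
  (∀ s ∈ S, F s ∈ T) ∧ ∀ s n, s ++ [n] ∈ S → IsStrictPrefix (F s) (F (s ++ [n]))

/-- For well-founded trees, `TreeLE S T` and `TreeLT S T` say that the rank of `S` is at most,
respectively less than, the rank of `T`. -/
def TreeLE (S T : Set (List ℕ)) : Prop := ∃ F, IsTreeHom F S T

def TreeLT (S T : Set (List ℕ)) : Prop := [] ∈ T ∧ TreeLE S (T \ {[]})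

lemma isTreeHom_of_nil_notMem {S : tree ℕ} (hS : [] ∉ S) (F : List ℕ → List ℕ)
    (T : Set (List ℕ)) : IsTreeHom F S T :=
  ⟨fun s hs => absurd (Tree.mem_of_prefix s.nil_prefix hs) hS,
    fun s _ hs => absurd (Tree.mem_of_prefix (s ++ _).nil_prefix hs) hS⟩

lemma IsTreeHom.isStrictPrefix_apply {S : tree ℕ} {T : Set (List ℕ)} {F : List ℕ → List ℕ}
    (hF : IsTreeHom F S T) {s t : List ℕ} (ht : t ∈ S) (hst : IsStrictPrefix s t) :
    IsStrictPrefix (F s) (F t) := by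
  induction t using List.reverseRecOn generalizing s with
  | nil => exact absurd rfl hst.ne_nil
  | append_singleton t n ih =>
    rcases isStrictPrefix_append_singleton_iff.1 hst with rfl | hst
    · exact hF.2 s n ht
    · exact (ih (Tree.mem_of_append ht) hst).trans (hF.2 t n ht)

lemma TreeLE.illFounded {S T : tree ℕ} (h : TreeLE S T) (hS : IllFounded S) : IllFounded T := by
  obtain ⟨F, hF⟩ := h
  obtain ⟨b, hb⟩ := hS
  exact illFounded_of_chain (fun n => F (initSeg b n)) (fun n => hF.1 _ (hb n))
    fun n => by simpa [initSeg_succ] using hF.2 _ (b n) (initSeg_succ b n ▸ hb (n + 1))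

lemma TreeLT.treeLE {S T : Set (List ℕ)} (h : TreeLT S T) : TreeLE S T :=
  let ⟨_, F, hF⟩ := h
  ⟨F, fun s hs => (hF.1 s hs).1, hF.2⟩

lemma treeLT_of_illFounded {S : Set (List ℕ)} {T : tree ℕ} (hT : IllFounded T) : TreeLT S T := by
  obtain ⟨b, hb⟩ := hT
  refine ⟨initSeg_zero b ▸ hb 0, fun s => initSeg b (s.length + 1), fun s _ => ⟨hb _, ?_⟩,
    fun s n _ => initSeg_isStrictPrefix_initSeg b (by simp)⟩
  simp [← List.length_eq_zero_iff]

lemma TreeLE.not_treeLT {S T : tree ℕ} (hS : ¬ IllFounded S) (hle : TreeLE T S) :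
    ¬ TreeLT S T := by
  rintro ⟨hT, F, hF⟩
  obtain ⟨G, hG⟩ := hle
  -- `G ∘ F` strictly moves `G []` up, so its iterates form an infinite chain in `S`
  have hmaps : ∀ s ∈ S, G (F s) ∈ S := fun s hs => hG.1 _ (hF.1 s hs).1
  have hmono : ∀ {s t}, t ∈ S → IsStrictPrefix s t → IsStrictPrefix (G (F s)) (G (F t)) :=
    fun ht hst => hG.isStrictPrefix_apply (hF.1 _ ht).1 (hF.isStrictPrefix_apply ht hst)
  have ha : G [] ∈ S := hG.1 [] hT
  have hstep : IsStrictPrefix (G []) (G (F (G []))) :=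
    hG.isStrictPrefix_apply (hF.1 _ ha).1 (isStrictPrefix_nil_iff.2 (hF.1 _ ha).2)
  have hmem : ∀ n, (G ∘ F)^[n] (G []) ∈ S := by
    intro n
    induction n with
    | zero => exact ha
    | succ n ih => rw [Function.iterate_succ_apply']; exact hmaps _ ih
  refine hS (illFounded_of_chain _ hmem fun n => ?_)
  induction n with
  | zero => exact hstep
  | succ n ih =>
    simp only [Function.iterate_succ_apply'] at ih ⊢
    exact hmono (hmaps _ (hmem n)) ih

lemma exists_isTreeHom_of_forall_extend {S : tree ℕ} (P : List ℕ → List ℕ → Prop) {u : List ℕ}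
    (hu : P [] u)
    (hext : ∀ s n w, s ++ [n] ∈ S → P s w → ∃ v, P (s ++ [n]) v ∧ IsStrictPrefix w v) :
    ∃ F : List ℕ → List ℕ, (∀ s ∈ S, P s (F s)) ∧
      ∀ s n, s ++ [n] ∈ S → IsStrictPrefix (F s) (F (s ++ [n])) := by
  choose! next hnext using hext
  -- recursion along the reversed list, so that `s ++ [n]` is a structural step
  let G : List ℕ → List ℕ := fun r => r.rec u fun n r w => next r.reverse n w
  have hG : ∀ s n, G (s ++ [n]).reverse = next s n (G s.reverse) := by simp [G]
  have hP : ∀ s ∈ S, P s (G s.reverse) := by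
    intro s
    induction s using List.reverseRecOn with
    | nil => exact fun _ => hu
    | append_singleton s n ih =>
      intro hs
      rw [hG]
      exact (hnext s n _ hs (ih (Tree.mem_of_append hs))).1
  refine ⟨fun s => G s.reverse, hP, fun s n hs => ?_⟩
  simp only [hG]
  exact (hnext s n _ hs (hP s (Tree.mem_of_append hs))).2

open IsWellFounded in
lemma exists_isTreeHom_of_rank_le {S T : tree ℕ} [IsWellFounded _ (extRel S)]
    [IsWellFounded _ (extRel T)] {u : List ℕ} (hu : u ∈ T)
    (h : rank (extRel S) [] ≤ rank (extRel T) u) :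
    ∃ F, IsTreeHom F S T ∧ ∀ s ∈ S, u <+: F s := by
  obtain ⟨F, hP, hstep⟩ := exists_isTreeHom_of_forall_extend (S := S)
    (fun s w => w ∈ T ∧ u <+: w ∧ rank (extRel S) s ≤ rank (extRel T) w)
    ⟨hu, List.prefix_rfl, h⟩ fun s n w hsn ⟨_, huw, hrank⟩ => by
      obtain ⟨v, ⟨hv, hwv⟩, hle⟩ := exists_rel_le_rank_of_lt_rank
        ((rank_lt_of_rel ⟨hsn, isStrictPrefix_append_singleton s n⟩).trans_le hrank)
      exact ⟨v, ⟨hv, huw.trans hwv.1, hle⟩, hwv⟩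
  exact ⟨F, ⟨fun s hs => (hP s hs).1, hstep⟩, fun s hs => (hP s hs).2.1⟩

open IsWellFounded in
theorem treeLT_or_treeLE {S T : tree ℕ} (hS : ¬ IllFounded S) : TreeLT S T ∨ TreeLE T S := by
  by_cases hT : IllFounded T
  · exact .inl (treeLT_of_illFounded hT)
  by_cases hT₀ : [] ∈ T
  swap
  · exact .inr ⟨id, isTreeHom_of_nil_notMem hT₀ id S⟩
  by_cases hS₀ : [] ∈ S
  swap
  · exact .inl ⟨hT₀, id, isTreeHom_of_nil_notMem hS₀ id _⟩
  have := IsWellFounded.mk (wellFounded_extRel hS)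
  have := IsWellFounded.mk (wellFounded_extRel hT)
  rcases le_or_gt (rank (extRel T) []) (rank (extRel S) []) with h | h
  · obtain ⟨F, hF, -⟩ := exists_isTreeHom_of_rank_le hS₀ h
    exact .inr ⟨F, hF⟩
  · obtain ⟨c, ⟨hc, hcne⟩, hle⟩ := exists_rel_le_rank_of_lt_rank h
    obtain ⟨F, hF, hcF⟩ := exists_isTreeHom_of_rank_le hc hle
    refine .inl ⟨hT₀, F, fun s hs => ⟨hF.1 s hs, fun hFs => hcne.ne_nil ?_⟩, hF.2⟩
    exact List.prefix_nil.1 (hFs ▸ hcF s hs)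

/-! ### Coded trees and point trees -/

def codedTree (t : ℕ → ℕ) : tree ℕ :=
  ⟨{s | ∀ p, p <+: s → t (Encodable.encode p) = 0},
    fun _ _ h p hp => h p (hp.trans (List.prefix_append _ _))⟩

@[simp] lemma mem_codedTree {t : ℕ → ℕ} {s : List ℕ} :
    s ∈ codedTree t ↔ ∀ p, p <+: s → t (Encodable.encode p) = 0 :=
  Iff.rfl

lemma measurable_mem_codedTree (s : List ℕ) : Measurable fun t : ℕ → ℕ => s ∈ codedTree t := by
  simp only [mem_codedTree]
  fun_prop

open Classical in
noncomputable def codeOf (T : tree ℕ) (n : ℕ) : ℕ :=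
  if Denumerable.ofNat (List ℕ) n ∈ T then 0 else 1

lemma codedTree_codeOf (T : tree ℕ) : codedTree (codeOf T) = T := by
  ext s
  simp only [mem_codedTree, codeOf, Denumerable.ofNat_encode, ite_eq_left_iff,
    one_ne_zero, imp_false, not_not]
  exact ⟨fun h => h s List.prefix_rfl, fun h p hp => Tree.mem_of_prefix hp h⟩

section PointTree

variable {Z : Type*} [TopologicalSpace Z]

lemma initSeg_length_eq_of_append_singleton {b : ℕ → ℕ} {s : List ℕ} {n : ℕ}
    (h : initSeg b (s ++ [n]).length = s ++ [n]) : initSeg b s.length = s := by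
  rw [List.length_append, List.length_singleton, initSeg_succ] at h
  exact (List.append_inj h (by simp)).1

def pointTree (f : (ℕ → ℕ) → Z) (z : Z) : tree ℕ :=
  ⟨{s | z ∈ closure (f '' {b | initSeg b s.length = s})},
    fun _ _ h => closure_mono (image_mono fun _ => initSeg_length_eq_of_append_singleton) h⟩

@[simp] lemma mem_pointTree {f : (ℕ → ℕ) → Z} {z : Z} {s : List ℕ} :
    s ∈ pointTree f z ↔ z ∈ closure (f '' {b | initSeg b s.length = s}) :=
  Iff.rfl

lemma measurable_mem_pointTree [MeasurableSpace Z] [OpensMeasurableSpace Z]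
    (f : (ℕ → ℕ) → Z) (s : List ℕ) : Measurable fun z => s ∈ pointTree f z :=
  measurableSet_setOfPred.1 isClosed_closure.measurableSet

lemma illFounded_pointTree_iff [T3Space Z] {f : (ℕ → ℕ) → Z} (hf : Continuous f) {z : Z} :
    IllFounded (pointTree f z) ↔ z ∈ range f := by
  constructor
  · rintro ⟨b, hb⟩
    -- the images of the cylinders around `b` shrink to `f b`, and `Z` is regular
    have hzb : z ⤳ f b := specializes_iff_pure.2 fun V hV => by
      obtain ⟨V', hV', hV'c, hV'V⟩ := exists_mem_nhds_isClosed_subset hV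
      obtain ⟨n, hn⟩ := exists_initSeg_subset (hf.continuousAt hV')
      have hz := hb n
      rw [mem_pointTree, length_initSeg] at hz
      exact hV'V (closure_minimal (image_subset_iff.2 hn) hV'c hz)
    exact ⟨b, hzb.eq.symm⟩
  · rintro ⟨b, rfl⟩
    exact ⟨b, fun n => subset_closure (mem_image_of_mem f (by simp))⟩

end PointTree

section Analytic

variable {W : Type*} [TopologicalSpace W] [PolishSpace W] [MeasurableSpace W] [BorelSpace W]
  {S T : W → Set (List ℕ)}

theorem analyticSet_setOf_treeLE (hS : ∀ s, Measurable fun w => s ∈ S w)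
    (hT : ∀ s, Measurable fun w => s ∈ T w) : AnalyticSet {w | TreeLE (S w) (T w)} := by
  -- a map `List ℕ → List ℕ` is coded by `g : ℕ → ℕ` through the encoding of `List ℕ`
  let F : (ℕ → ℕ) → List ℕ → List ℕ := fun g s =>
    Denumerable.ofNat (List ℕ) (g (Encodable.encode s))
  have hcode : {w | TreeLE (S w) (T w)} =
      Prod.fst '' {p : W × (ℕ → ℕ) | IsTreeHom (F p.2) (S p.1) (T p.1)} := by
    ext w
    constructor
    · rintro ⟨G, hG⟩
      refine ⟨(w, fun n => Encodable.encode (G (Denumerable.ofNat (List ℕ) n))), ?_, rfl⟩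
      simpa [F] using hG
    · rintro ⟨⟨w, g⟩, hg, rfl⟩
      exact ⟨_, hg⟩
  rw [hcode]
  refine (MeasurableSet.analyticSet ?_).image_of_continuous continuous_fst
  have hmemT : ∀ s, Measurable fun p : W × (ℕ → ℕ) => F p.2 s ∈ T p.1 := fun s =>
    (measurable_from_prod_countable_left
      (f := fun q : W × ℕ => Denumerable.ofNat (List ℕ) q.2 ∈ T q.1)
      fun n => hT (Denumerable.ofNat (List ℕ) n)).comp
      (by fun_prop : Measurable fun p : W × (ℕ → ℕ) => (p.1, p.2 (Encodable.encode s)))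
  have hstep : ∀ s t, Measurable fun p : W × (ℕ → ℕ) => IsStrictPrefix (F p.2 s) (F p.2 t) :=
    fun s t => (measurable_of_countable fun q : ℕ × ℕ =>
      IsStrictPrefix (Denumerable.ofNat (List ℕ) q.1) (Denumerable.ofNat (List ℕ) q.2)).comp
      (by fun_prop : Measurable fun p : W × (ℕ → ℕ) =>
        (p.2 (Encodable.encode s), p.2 (Encodable.encode t)))
  have hmemS : ∀ s, Measurable fun p : W × (ℕ → ℕ) => s ∈ S p.1 := fun s =>
    (hS s).comp measurable_fst
  exact measurableSet_setOfPred.2 <| (Measurable.forall fun s => (hmemS s).imp (hmemT s)).and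
    (Measurable.forall fun s => Measurable.forall fun n => (hmemS _).imp (hstep _ _))

theorem analyticSet_setOf_treeLT (hS : ∀ s, Measurable fun w => s ∈ S w)
    (hT : ∀ s, Measurable fun w => s ∈ T w) : AnalyticSet {w | TreeLT (S w) (T w)} :=
  (measurableSet_setOfPred.2 (hT [])).analyticSet.inter
    (analyticSet_setOf_treeLE hS fun s => (hT s).and measurable_const)

end Analytic

/-! ### Boundedness -/

def amalgamatedTree (q : (ℕ → ℕ) → ℕ → ℕ) : tree ℕ :=
  ⟨{v | ∃ w, v.map (fun n => n.unpair.1) = initSeg w v.length ∧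
      v.map (fun n => n.unpair.2) ∈ codedTree (q w)}, by
    rintro v a ⟨w, h₁, h₂⟩
    rw [List.map_append, List.length_append, List.length_singleton, initSeg_succ] at h₁
    rw [List.map_append] at h₂
    exact ⟨w, (List.append_inj h₁ (by simp)).1, Tree.mem_of_append h₂⟩⟩

lemma treeLE_codedTree_amalgamatedTree (q : (ℕ → ℕ) → ℕ → ℕ) (w : ℕ → ℕ) :
    TreeLE (codedTree (q w)) (amalgamatedTree q) := by
  let F : List ℕ → List ℕ := fun s => ((initSeg w s.length).zip s).map fun p => Nat.pair p.1 p.2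
  have hlen : ∀ s, (F s).length = s.length := by simp [F]
  have hfst : ∀ s, (F s).map (fun n => n.unpair.1) = initSeg w s.length := by
    simp [F, Function.comp_def, List.map_fst_zip]
  have hsnd : ∀ s, (F s).map (fun n => n.unpair.2) = s := by
    simp [F, Function.comp_def, List.map_snd_zip]
  have happ : ∀ s n, F (s ++ [n]) = F s ++ [Nat.pair (w s.length) n] := by
    simp [F, initSeg_succ, List.zip_append]
  refine ⟨F, fun s hs => ⟨w, by rw [hlen, hfst], by rwa [hsnd]⟩, fun s n _ => ?_⟩
  rw [happ]
  exact isStrictPrefix_append_singleton _ _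

lemma not_illFounded_amalgamatedTree {q : (ℕ → ℕ) → ℕ → ℕ} (hq : Continuous q)
    (h : ∀ w, ¬ IllFounded (codedTree (q w))) : ¬ IllFounded (amalgamatedTree q) := by
  rintro ⟨c, hc⟩
  -- the branch `c` interleaves a point `w` with a branch `b` of `codedTree (q w)`
  set w : ℕ → ℕ := fun i => (c i).unpair.1
  set b : ℕ → ℕ := fun i => (c i).unpair.2
  have happrox : ∀ k, ∃ v, initSeg v k = initSeg w k ∧ initSeg b k ∈ codedTree (q v) := by
    intro k
    obtain ⟨v, h₁, h₂⟩ := hc k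
    rw [map_initSeg, length_initSeg] at h₁
    rw [map_initSeg] at h₂
    exact ⟨v, h₁.symm, h₂⟩
  refine h w ⟨b, fun m p hp => ?_⟩
  have hnhds : {v | q v (Encodable.encode p) = q w (Encodable.encode p)} ∈ nhds w :=
    ((isOpen_discrete {q w (Encodable.encode p)}).preimage (by fun_prop)).mem_nhds rfl
  obtain ⟨n, hn⟩ := exists_initSeg_subset hnhds
  obtain ⟨v, hvw, hb⟩ := happrox (max n m)
  have hv : q v (Encodable.encode p) = q w (Encodable.encode p) :=
    hn (initSeg_eq_initSeg_iff.2 fun i hi => initSeg_eq_initSeg_iff.1 hvw i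
      (hi.trans_le (le_max_left n m)))
  rw [← hv]
  exact Tree.mem_of_prefix (initSeg_prefix_initSeg b (le_max_right n m)) hb p hp

def addRoot (T : tree ℕ) : tree ℕ :=
  ⟨{s | s = [] ∨ ∃ t ∈ T, s = 0 :: t}, by
    rintro (_ | ⟨a, s⟩) n (h | ⟨t, ht, h⟩)
    · exact .inl rfl
    · exact .inl rfl
    · simp at h
    · obtain ⟨rfl, rfl⟩ := List.cons_eq_cons.1 h
      exact .inr ⟨s, Tree.mem_of_append ht, rfl⟩⟩

lemma treeLT_addRoot (T : tree ℕ) : TreeLT T (addRoot T) :=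
  ⟨.inl rfl, (0 :: ·), fun s hs => ⟨.inr ⟨s, hs, rfl⟩, List.cons_ne_nil _ _⟩,
    fun s n _ => ⟨List.cons_prefix_cons.2 ⟨rfl, List.prefix_append _ _⟩, by simp⟩⟩

lemma not_illFounded_addRoot {T : tree ℕ} (hT : ¬ IllFounded T) : ¬ IllFounded (addRoot T) := by
  rintro ⟨c, hc⟩
  refine hT ⟨fun i => c (i + 1), fun k => ?_⟩
  rcases hc (k + 1) with h | ⟨t, ht, h⟩
  · simpa using congrArg List.length h
  · rw [initSeg_succ'] at h
    exact (List.cons_eq_cons.1 h).2 ▸ ht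

theorem not_analyticSet_setOf_not_illFounded :
    ¬ AnalyticSet {t : ℕ → ℕ | ¬ IllFounded (codedTree t)} := by
  rw [AnalyticSet]
  rintro (h | ⟨q, hq, hrange⟩)
  · have hempty : (fun _ => 1 : ℕ → ℕ) ∈ {t : ℕ → ℕ | ¬ IllFounded (codedTree t)} :=
      fun ⟨b, hb⟩ => one_ne_zero (hb 0 [] List.nil_prefix)
    rw [h] at hempty
    exact hempty
  · have hwf : ∀ w, ¬ IllFounded (codedTree (q w)) := fun w => by
      have hw := mem_range_self (f := q) w
      rw [hrange] at hw
      exact hw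
    have hV := not_illFounded_amalgamatedTree hq hwf
    -- a well-founded tree strictly above every `codedTree (q w)` would be one of them
    obtain ⟨w, hw⟩ : codeOf (addRoot (amalgamatedTree q)) ∈ range q := by
      have hU := not_illFounded_addRoot hV
      rw [← codedTree_codeOf (addRoot _)] at hU
      exact hrange ▸ hU
    have hle := treeLE_codedTree_amalgamatedTree q w
    rw [hw, codedTree_codeOf] at hle
    exact hle.not_treeLT hV (treeLT_addRoot _)

theorem exists_not_illFounded_codedTree_mem {M : Set (ℕ → ℕ)} (hM : AnalyticSet Mᶜ)
    (hill : ∀ t, IllFounded (codedTree t) → t ∈ M) : ∃ t ∈ M, ¬ IllFounded (codedTree t) := by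
  by_contra! h
  have hcompl : Mᶜ = {t | ¬ IllFounded (codedTree t)} :=
    Set.ext fun t => ⟨fun ht hi => ht (hill t hi), fun ht htM => ht (h t htM)⟩
  exact not_analyticSet_setOf_not_illFounded (hcompl ▸ hM)

end Descriptive

open Descriptive

/-! ### Π¹₁ on Σ¹₁ families -/

theorem Pi11OnSigma11.analyticSet_compl_setOf_mem {X : Type*} [TopologicalSpace X] [PolishSpace X]
    {I : Set (Set X)} (hI : Pi11OnSigma11 I) {P : Type*} [TopologicalSpace P] [PolishSpace P]
    {L : Set (P × X)} (hL : AnalyticSet L) : AnalyticSet {p : P | {x | (p, x) ∈ L} ∈ I}ᶜ := by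
  rcases isEmpty_or_nonempty P with _ | _
  · simpa [eq_empty_of_isEmpty] using analyticSet_empty
  obtain ⟨h, hh, hsurj⟩ := PolishSpace.exists_nat_nat_continuous_surjective P
  rw [← hsurj.image_preimage {p : P | {x | (p, x) ∈ L} ∈ I}ᶜ]
  exact (hI _ (hL.preimage (hh.prodMap continuous_id))).image_of_continuous hh

theorem Pi11OnSigma11.fubiniProd {X Y : Type*} [TopologicalSpace X] [PolishSpace X]
    [TopologicalSpace Y] [PolishSpace Y] {I : Set (Set X)} {J : Set (Set Y)}
    (hI : Pi11OnSigma11 I) (hJ : Pi11OnSigma11 J) : Pi11OnSigma11 (FubiniProd I J) :=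
  fun L hL => hI _ <| hJ.analyticSet_compl_setOf_mem <|
    hL.preimage (f := fun q : ((ℕ → ℕ) × X) × Y => (q.1.1, (q.1.2, q.2))) (by fun_prop)

theorem Pi11OnSigma11.exists_analyticSet_disjoint_compl_mem {Z : Type*} [TopologicalSpace Z]
    [PolishSpace Z] {𝓘 : Set (Set Z)} (h𝓘 : Pi11OnSigma11 𝓘) {A : Set Z} (hA : AnalyticSet A)
    (hA𝓘 : A ∈ 𝓘) : ∃ D, AnalyticSet D ∧ A ∩ D = ∅ ∧ Dᶜ ∈ 𝓘 := by
  rw [AnalyticSet] at hA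
  rcases hA with rfl | ⟨f, hf, rfl⟩
  · exact ⟨univ, isClosed_univ.analyticSet, inter_univ _, compl_univ ▸ hA𝓘⟩
  borelize Z
  let B : Set ((ℕ → ℕ) × Z) := {p | TreeLT (codedTree p.1) (pointTree f p.2)}
  have hB : AnalyticSet B := analyticSet_setOf_treeLT
    (fun s => (measurable_mem_codedTree s).comp measurable_fst)
    (fun s => (measurable_mem_pointTree f s).comp measurable_snd)
  have hsec : ∀ t, IllFounded (codedTree t) → {z | (t, z) ∈ B} = range f := fun t ht => by
    ext z
    exact ⟨fun h => (illFounded_pointTree_iff hf).1 (h.treeLE.illFounded ht),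
      fun h => treeLT_of_illFounded ((illFounded_pointTree_iff hf).2 h)⟩
  obtain ⟨t, ht𝓘, ht⟩ :=
    exists_not_illFounded_codedTree_mem (h𝓘 B hB) fun t ht => (show {z | (t, z) ∈ B} ∈ 𝓘 from
      (hsec t ht).symm ▸ hA𝓘)
  refine ⟨{z | TreeLE (pointTree f z) (codedTree t)},
    analyticSet_setOf_treeLE (measurable_mem_pointTree f) fun _ => measurable_const, ?_, ?_⟩
  · exact eq_empty_of_forall_notMem fun z ⟨hz, hle⟩ =>
      ht (hle.illFounded ((illFounded_pointTree_iff hf).2 hz))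
  · have hcompl : {z | TreeLE (pointTree f z) (codedTree t)}ᶜ = {z | (t, z) ∈ B} :=
      Set.ext fun z => ⟨(treeLT_or_treeLE ht).resolve_right, fun h hle => hle.not_treeLT ht h⟩
    rw [hcompl]
    exact ht𝓘

theorem fubini_small_analytic_separated_general
    {X Y : Type*} [TopologicalSpace X] [PolishSpace X] [TopologicalSpace Y] [PolishSpace Y]
    (I : Set (Set X)) (J : Set (Set Y))
    (hIp : Pi11OnSigma11 I) (hJp : Pi11OnSigma11 J)
    (A : Set (X × Y)) (hA : MeasureTheory.AnalyticSet A) (hAmem : A ∈ FubiniProd I J) :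
    ∃ D : Set (X × Y), MeasureTheory.AnalyticSet D ∧ A ∩ D = ∅ ∧
      {x : X | {y : Y | (x, y) ∉ D} ∉ J} ∈ I :=
  (hIp.fubiniProd hJp).exists_analyticSet_disjoint_compl_mem hA hAmem

theorem fubini_small_analytic_separated
    {X Y : Type*} [TopologicalSpace X] [PolishSpace X] [TopologicalSpace Y] [PolishSpace Y]
    (I : Set (Set X)) (J : Set (Set Y))
    (hI : SigmaIdeal I) (hJ : SigmaIdeal J)
    (hIp : Pi11OnSigma11 I) (hJp : Pi11OnSigma11 J)
    (A : Set (X × Y)) (hA : MeasureTheory.AnalyticSet A) (hAmem : A ∈ FubiniProd I J) :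
    ∃ D : Set (X × Y), MeasureTheory.AnalyticSet D ∧ A ∩ D = ∅ ∧
      {x : X | {y : Y | (x, y) ∉ D} ∉ J} ∈ I :=
  fubini_small_analytic_separated_general I J hIp hJp A hA hAmem
end

section
/- Let X and Y be Polish spaces and let f : Y → X be a continuous open surjection. Suppose B ⊆ Y has the Baire property and the set {x ∈ X : B ∩ f⁻¹({x}) is meager in the subspace f⁻¹({x})} is comeager in X. Then B is meager in Y. -/
open Set

/-- `B` has the Baire property: its symmetric difference with some open set is meager. -/
def HasBaireProperty {Y : Type*} [TopologicalSpace Y] (B : Set Y) : Prop :=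
  ∃ U : Set Y, IsOpen U ∧ IsMeagre (symmDiff B U)

/-!
Let `U` be open with `M = B ∆ U` meager. Because `f` is continuous and open, the
preimage in a fiber of a dense open set is dense for comeager many fibers; taking a countable
family of dense open sets witnessing that `M` is meager, `M` is meager in comeager many fibers.
Then for comeager many `x` both `B` and `M` are meager in `f⁻¹{x}`, hence so is the open set
`U ⊆ B ∪ M`, which by the Baire category theorem in the (Polish) fiber misses `f⁻¹{x}`. So the
open set `f '' U` is meager in the Baire space `X`, hence empty, and `B ⊆ U ∪ M = M`.
-/

lemma IsOpen.isNowhereDense_frontier {X : Type*} [TopologicalSpace X] {s : Set X}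
    (hs : IsOpen s) : IsNowhereDense (frontier s) := by
  rw [isClosed_frontier.isNowhereDense_iff, ← frontier_compl]
  exact interior_frontier hs.isClosed_compl

lemma image_subset_setOf_not_isMeagre_fiber {X Y : Type*} [TopologicalSpace Y] {f : Y → X}
    [∀ x : X, BaireSpace (f ⁻¹' {x})]
    {U : Set Y} (hU : IsOpen U) :
    f '' U ⊆ {x : X | ¬ IsMeagre (Subtype.val ⁻¹' U : Set (f ⁻¹' {x}))} := by
  rintro _ ⟨y, hyU, rfl⟩
  exact not_isMeagre_of_isOpen (hU.preimage continuous_subtype_val) ⟨⟨y, rfl⟩, hyU⟩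

section Fibers

variable {X Y : Type*} [TopologicalSpace X] [TopologicalSpace Y] {f : Y → X}

/- A point `x` outside the countably many nowhere dense sets `frontier (f '' (V ∩ W))`, `V` basic,
has the property that `f⁻¹{x}` meets `V ∩ W` as soon as it meets `V`. -/
lemma isMeagre_setOf_not_dense_fiber_inter [SecondCountableTopology Y]
    (hf : Continuous f) (hopen : IsOpenMap f) {W : Set Y} (hWo : IsOpen W) (hWd : Dense W) :
    IsMeagre {x : X | ¬ Dense (Subtype.val ⁻¹' W : Set (f ⁻¹' {x}))} := by
  obtain ⟨b, hbc, -, hb⟩ := TopologicalSpace.exists_countable_basis Y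
  have hVW : ∀ V ∈ b, IsOpen (f '' (V ∩ W)) := fun V hV => hopen _ ((hb.isOpen hV).inter hWo)
  refine (isMeagre_biUnion hbc fun V hV => (hVW V hV).isNowhereDense_frontier.isMeagre).mono ?_
  intro x hx
  contrapose! hx
  simp only [mem_iUnion, not_exists] at hx
  rw [mem_ofPred_eq, not_not, Subtype.dense_iff]
  rintro y (rfl : f y = x)
  rw [hb.mem_closure_iff]
  intro V hV hyV
  have hy_cl : f y ∈ closure (f '' (V ∩ W)) :=
    image_closure_subset_closure_image hf ⟨y, hWd.open_subset_closure_inter (hb.isOpen hV) hyV, rfl⟩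
  obtain ⟨z, ⟨hzV, hzW⟩, hzy⟩ : f y ∈ f '' (V ∩ W) := by
    by_contra hy
    exact hx V hV ⟨hy_cl, by rwa [(hVW V hV).interior_eq]⟩
  exact ⟨z, hzV, ⟨z, hzy⟩, hzW, rfl⟩

lemma IsMeagre.isMeagre_setOf_not_isMeagre_fiber [SecondCountableTopology Y]
    (hf : Continuous f) (hopen : IsOpenMap f) {M : Set Y} (hM : IsMeagre M) :
    IsMeagre {x : X | ¬ IsMeagre (Subtype.val ⁻¹' M : Set (f ⁻¹' {x}))} := by
  obtain ⟨T, hTo, hTd, hTc, hTM⟩ := mem_residual_iff.mp hM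
  refine (isMeagre_biUnion hTc fun W hW =>
    isMeagre_setOf_not_dense_fiber_inter hf hopen (hTo W hW) (hTd W hW)).mono ?_
  intro x hx
  contrapose! hx
  simp only [mem_iUnion, mem_ofPred_eq, not_exists, not_not] at hx
  rw [mem_ofPred_eq, not_not, IsMeagre]
  filter_upwards [(countable_bInter_mem hTc).2 fun W hW =>
    residual_of_dense_open ((hTo W hW).preimage continuous_subtype_val) (hx W hW)] with z hz
  exact hTM (by simpa using hz)

lemma isMeagre_of_isMeagre_setOf_not_isMeagre_fiber [BaireSpace X] [SecondCountableTopology Y]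
    [∀ x : X, BaireSpace (f ⁻¹' {x})] (hf : Continuous f) (hopen : IsOpenMap f)
    {B : Set Y} (hB : HasBaireProperty B)
    (h : IsMeagre {x : X | ¬ IsMeagre (Subtype.val ⁻¹' B : Set (f ⁻¹' {x}))}) :
    IsMeagre B := by
  obtain ⟨U, hU, hM⟩ := hB
  have hfU : IsMeagre (f '' U) := by
    refine (h.union (hM.isMeagre_setOf_not_isMeagre_fiber hf hopen)).mono fun x hx => ?_
    by_contra hBM
    simp only [mem_union, mem_ofPred_eq, not_or, not_not] at hBM
    exact image_subset_setOf_not_isMeagre_fiber hU hx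
      ((hBM.2.union hBM.1).mono (preimage_mono (le_symmDiff_sup_left B U)))
  have hU_empty : U = ∅ := by
    by_contra hne
    obtain ⟨y, hy⟩ := nonempty_iff_ne_empty.mpr hne
    exact not_isMeagre_of_isOpen (hopen U hU) ⟨f y, y, hy, rfl⟩ hfU
  refine hM.mono fun y hy => ?_
  simpa [hU_empty] using le_symmDiff_sup_right B U hy

end Fibers

theorem kuratowski_ulam_for_open_maps_general
    {X Y : Type*} [TopologicalSpace X] [PolishSpace X]
    [TopologicalSpace Y] [PolishSpace Y]
    (f : Y → X) (hf : Continuous f) (hopen : IsOpenMap f)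
    (B : Set Y) (hB : HasBaireProperty B)
    (h : IsMeagre {x : X | ¬ IsMeagre (Subtype.val ⁻¹' B : Set (f ⁻¹' {x}))}) :
    IsMeagre B := by
  have : ∀ x : X, TopologicalSpace.IsCompletelyMetrizableSpace (f ⁻¹' {x}) := fun x =>
    (isClosed_singleton.preimage hf).isCompletelyMetrizableSpace
  exact isMeagre_of_isMeagre_setOf_not_isMeagre_fiber hf hopen hB h

theorem kuratowski_ulam_for_open_maps
    {X Y : Type*} [TopologicalSpace X] [PolishSpace X]
    [TopologicalSpace Y] [PolishSpace Y]
    (f : Y → X) (hf : Continuous f) (hopen : IsOpenMap f) (hsurj : Function.Surjective f)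
    (B : Set Y) (hB : HasBaireProperty B)
    (h : IsMeagre {x : X | ¬ IsMeagre (Subtype.val ⁻¹' B : Set (f ⁻¹' {x}))}) :
    IsMeagre B :=
  kuratowski_ulam_for_open_maps_general f hf hopen B hB h
end

section
/- Let X be a Polish space and let I be a σ-ideal on X generated by closed sets with X ∉ I. Let F ⊆ X × ω^ω be an analytic set (the graph of a multifunction from X to subsets of ω^ω). Then there exists a Gδ set G ⊆ X with G ∉ I such that for every open set U ⊆ ω^ω, the set {x ∈ G : ∃ y ∈ U, (x,y) ∈ F} is a countable union of sets each of which is Gδ in the subspace topology of G (i.e., it is Σ⁰₃ relative to G). -/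
open Set

/-!
Let `W` be the union of the basic open sets that belong to `I` and `P := X \ W`. Then `P` is a
closed `I`-perfect set, so every closed set in `I` is nowhere dense in `P` and, since `I` is
generated by closed sets, every set in `I` is meagre in `P`. For a basic open `V ⊆ ω^ω` the set
`{x | ∃ y ∈ V, (x, y) ∈ F}` is analytic, hence has the Baire property in `P`: it agrees with an
open set off a meagre set. A dense `Gδ` subset `G` of `P` avoiding all these countably many
meagre sets is not meagre, hence not in `I`, and on `G` each set `{x | ∃ y ∈ U, (x, y) ∈ F}`
is a union of traces of open sets, so it is even relatively open. (If `∅ ∉ I`, then `I` is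
empty and `G = ∅` works.)
-/

open Filter Topology TopologicalSpace MeasureTheory

section BaireProperty

variable {α : Type*} [TopologicalSpace α]

lemma isMeagre_diff_of_residualEq {s t : Set α} (h : s =ᵇ t) : IsMeagre (s \ t) :=
  mem_of_superset (eventuallyEq_set.mp h) fun _ hx hst => hst.2 (hx.mp hst.1)

lemma residualEq_of_subset_of_isMeagre_diff {s t : Set α} (hst : s ⊆ t)
    (h : IsMeagre (t \ s)) : s =ᵇ t :=
  eventuallyEq_set.mpr <| mem_of_superset h fun _ hx =>
    ⟨fun hs => hst hs, fun ht => by_contra fun hs => hx ⟨ht, hs⟩⟩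

theorem exists_baireMeasurableSet_hull [SecondCountableTopology α] (E : Set α) :
    ∃ H, BaireMeasurableSet H ∧ E ⊆ H ∧
      ∀ Z, BaireMeasurableSet Z → E ⊆ Z → IsMeagre (H \ Z) := by
  obtain ⟨b, hbc, -, hb⟩ := exists_countable_basis α
  set U := ⋃ V ∈ {V ∈ b | IsMeagre (E ∩ V)}, V
  have hUo : IsOpen U := isOpen_biUnion fun V hV => hb.isOpen hV.1
  have hEU : IsMeagre (E ∩ U) := by
    rw [inter_iUnion₂]
    exact isMeagre_biUnion (hbc.mono fun V hV => hV.1) fun V hV => hV.2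
  refine ⟨Uᶜ ∪ E ∩ U, hUo.baireMeasurableSet.compl.union hEU.baireMeasurableSet,
    fun x hx => (em (x ∈ U)).elim (fun h => .inr ⟨hx, h⟩) .inl, fun Z hZ hEZ => ?_⟩
  -- `Uᶜ \ Z` is meagre: an open set `O` equal to it up to a meagre set meets `E` in a meagre
  -- set only, hence lies inside `U`.
  obtain ⟨O, hOo, hO⟩ := (hUo.baireMeasurableSet.compl.diff hZ).residualEq_isOpen
  have hOU : O ⊆ U := by
    intro x hxO
    obtain ⟨V, hVb, hxV, hVO⟩ := hb.exists_subset_of_mem_open hxO hOo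
    have hEV : IsMeagre (E ∩ V) := by
      refine (isMeagre_diff_of_residualEq hO.symm).mono fun y hy => ?_
      exact ⟨hVO hy.2, fun h => h.2 (hEZ hy.1)⟩
    exact mem_biUnion (show V ∈ {V ∈ b | IsMeagre (E ∩ V)} from ⟨hVb, hEV⟩) hxV
  have hUZ : IsMeagre (Uᶜ \ Z) := by
    refine (isMeagre_diff_of_residualEq hO).mono fun x hx => ?_
    exact ⟨hx, fun hxO => hx.1 (hOU hxO)⟩
  refine (hUZ.union hEU).mono ?_
  rintro x ⟨hx | hx, hxZ⟩
  exacts [.inl ⟨hx, hxZ⟩, .inr hx]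

-- Finite sequences are written in reverse, as in `PiNat.res`: `n :: s` extends `s` by `n`.
theorem exists_forall_res_of_forall_exists_cons {T : List ℕ → Prop} (hnil : T [])
    (hcons : ∀ s, T s → ∃ n, T (n :: s)) : ∃ y : ℕ → ℕ, ∀ k, T (PiNat.res y k) := by
  choose! next hnext using hcons
  let path : ℕ → List ℕ := fun k => Nat.rec [] (fun _ s => next s :: s) k
  have hpath : ∀ k, T (path k) := fun k => Nat.rec hnil (fun k ih => hnext _ ih) k
  have hres : ∀ k, path k = PiNat.res (fun i => next (path i)) k := by
    intro k
    induction k with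
    | zero => rfl
    | succ k ih => simp only [PiNat.res_succ, ← ih]; rfl
  exact ⟨_, fun k => hres k ▸ hpath k⟩

/-- Replace each `A s` by a Baire-measurable hull inside `B s`. The points of a hull lying in no
hull of a child form a meagre set; every other point of the root hull lies on a branch, hence
in `A []`. -/
theorem baireMeasurableSet_of_souslinScheme [SecondCountableTopology α]
    {A B : List ℕ → Set α} (hAB : ∀ s, A s ⊆ B s) (hB : ∀ s, BaireMeasurableSet (B s))
    (hA : ∀ s, A s ⊆ ⋃ n, A (n :: s)) (hbranch : ∀ y, ⋂ k, B (PiNat.res y k) ⊆ A []) :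
    BaireMeasurableSet (A []) := by
  choose H hHbm hAH hHmin using fun s => exists_baireMeasurableSet_hull (A s)
  set H' : List ℕ → Set α := fun s => H s ∩ B s
  have hH'bm : ∀ s, BaireMeasurableSet (H' s) := fun s => (hHbm s).inter (hB s)
  have hAH' : ∀ s, A s ⊆ H' s := fun s => subset_inter (hAH s) (hAB s)
  set M := ⋃ s, H' s \ ⋃ n, H' (n :: s)
  have hM : IsMeagre M := isMeagre_iUnion fun s =>
    (hHmin s _ (.iUnion fun n => hH'bm _) ((hA s).trans (iUnion_mono fun n => hAH' _))).mono
      (sdiff_subset_sdiff_left inter_subset_left)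
  have hHM : H' [] \ M ⊆ A [] := by
    rintro x ⟨hx, hxM⟩
    have hcons : ∀ s, x ∈ H' s → ∃ n, x ∈ H' (n :: s) := fun s hs =>
      by_contra fun h => hxM (mem_iUnion.2 ⟨s, hs, by simpa using h⟩)
    obtain ⟨y, hy⟩ := exists_forall_res_of_forall_exists_cons (T := (x ∈ H' ·)) hx hcons
    exact hbranch y (mem_iInter.2 fun k => (hy k).2)
  exact (hH'bm []).congr (residualEq_of_subset_of_isMeagre_diff (hAH' [])
    (hM.mono fun x hx => by_contra fun hxM => hx.2 (hHM ⟨hx.1, hxM⟩))).symm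

lemma eq_of_forall_mem_closure_image_cylinder [T2Space α] {f : (ℕ → ℕ) → α} (hf : Continuous f)
    {y : ℕ → ℕ} {x : α} (h : ∀ k, x ∈ closure (f '' PiNat.cylinder y k)) : f y = x := by
  by_contra hne
  obtain ⟨U, V, hU, hV, hyU, hxV, hUV⟩ := t2_separation hne
  obtain ⟨_, ⟨z, k, rfl⟩, hyc, hsub⟩ :=
    (PiNat.isTopologicalBasis_cylinders _).exists_subset_of_mem_open
      (show y ∈ f ⁻¹' U from hyU) (hU.preimage hf)
  rw [← PiNat.mem_cylinder_iff_eq.1 hyc] at hsub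
  obtain ⟨_, hxV', w, hw, rfl⟩ := mem_closure_iff.1 (h k) V hV hxV
  exact disjoint_left.1 hUV (hsub hw) hxV'

theorem MeasureTheory.AnalyticSet.baireMeasurableSet [T2Space α] [SecondCountableTopology α]
    {s : Set α} (hs : AnalyticSet s) : BaireMeasurableSet s := by
  rw [AnalyticSet] at hs
  rcases hs with rfl | ⟨f, hf, rfl⟩
  · exact IsMeagre.empty.baireMeasurableSet
  set A : List ℕ → Set α := fun s => f '' {w | PiNat.res w s.length = s}
  have hA0 : A [] = range f := by simp [A]
  rw [← hA0]
  refine baireMeasurableSet_of_souslinScheme (B := fun s => closure (A s))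
    (fun s => subset_closure) (fun s => isClosed_closure.isOpen_compl.baireMeasurableSet.of_compl)
    ?_ fun y x hx => hA0 ▸ ⟨y, eq_of_forall_mem_closure_image_cylinder hf fun k => ?_⟩
  · rintro s _ ⟨w, hw, rfl⟩
    exact mem_iUnion.2 ⟨w s.length, w, by simp_all, rfl⟩
  · simpa [A, ← PiNat.cylinder_eq_res] using mem_iInter.1 hx k

end BaireProperty

lemma IsGδ.image_val {X : Type*} [TopologicalSpace X] {s : Set X} (hs : IsGδ s) {t : Set s}
    (ht : IsGδ t) : IsGδ ((↑) '' t : Set X) := by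
  obtain ⟨T, hTo, hTc, rfl⟩ := ht
  choose! V hV hVT using fun o (ho : o ∈ T) => isOpen_induced_iff.1 (hTo o ho)
  have hT : ⋂₀ T = (↑) ⁻¹' ⋂ o ∈ T, V o := by
    rw [preimage_iInter₂, sInter_eq_biInter]
    exact iInter₂_congr fun o ho => (hVT o ho).symm
  rw [hT, Subtype.image_preimage_coe]
  exact hs.inter (.biInter_of_isOpen hTc hV)

lemma exists_isGδ_dense_forall_inter_eq_isOpen {α ι : Type*} [TopologicalSpace α]
    [BaireSpace α] [Countable ι] {A : ι → Set α} (hA : ∀ i, BaireMeasurableSet (A i)) :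
    ∃ t, IsGδ t ∧ Dense t ∧ ∃ O : ι → Set α, (∀ i, IsOpen (O i)) ∧ ∀ i, t ∩ A i = t ∩ O i := by
  choose O hO hAO using fun i => (hA i).residualEq_isOpen
  obtain ⟨t, htR, htGδ, htd⟩ :=
    mem_residual.1 (countable_iInter_mem.2 fun i => eventuallyEq_set.mp (hAO i))
  exact ⟨t, htGδ, htd, O, hO, fun i => ext fun x =>
    and_congr_right fun hx => mem_iInter.1 (htR hx) i⟩

lemma MeasureTheory.AnalyticSet.inter_isOpen {α : Type*} [TopologicalSpace α] {s u : Set α}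
    (hs : AnalyticSet s) (hu : IsOpen u) : AnalyticSet (s ∩ u) := by
  rw [AnalyticSet] at hs
  rcases hs with rfl | ⟨f, hf, rfl⟩
  · simpa using analyticSet_empty
  rw [← image_preimage_eq_range_inter]
  exact (hu.preimage hf).analyticSet_image hf

lemma MeasureTheory.AnalyticSet.setOf_exists_mem {X Y : Type*} [TopologicalSpace X]
    [TopologicalSpace Y] {F : Set (X × Y)} (hF : AnalyticSet F) {V : Set Y} (hV : IsOpen V) :
    AnalyticSet {x | ∃ y ∈ V, (x, y) ∈ F} := by
  have hproj : {x | ∃ y ∈ V, (x, y) ∈ F} = Prod.fst '' (F ∩ Prod.snd ⁻¹' V) := by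
    ext x; simp [and_comm]
  rw [hproj]
  exact (hF.inter_isOpen (hV.preimage continuous_snd)).image_of_continuous continuous_fst

lemma setOf_exists_mem_eq_biUnion {X Y : Type*} [TopologicalSpace Y] {b : Set (Set Y)}
    (hb : IsTopologicalBasis b) {U : Set Y} (hU : IsOpen U) (F : Set (X × Y)) :
    {x | ∃ y ∈ U, (x, y) ∈ F} = ⋃ V ∈ {V ∈ b | V ⊆ U}, {x | ∃ y ∈ V, (x, y) ∈ F} := by
  conv_lhs => rw [hb.open_eq_sUnion' hU]
  ext x
  simp only [mem_ofPred_eq, mem_sUnion, mem_iUnion, exists_prop]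
  grind

namespace SigmaIdeal

variable {X : Type*} {I : Set (Set X)}

lemma sUnion_mem (hI : SigmaIdeal I) (h0 : ∅ ∈ I) {S : Set (Set X)} (hS : S.Countable)
    (hSI : S ⊆ I) : ⋃₀ S ∈ I := by
  rcases S.eq_empty_or_nonempty with rfl | hne
  · simpa using h0
  obtain ⟨g, rfl⟩ := hS.exists_eq_range hne
  rw [sUnion_range]
  exact hI.2 g fun n => hSI (mem_range_self n)

lemma union_mem (hI : SigmaIdeal I) {a b : Set X} (ha : a ∈ I) (hb : b ∈ I) : a ∪ b ∈ I := by
  simpa using hI.sUnion_mem (hI.1 ∅ a (empty_subset a) ha) ((countable_singleton b).insert a)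
    (pair_subset ha hb)

/-- Removing from `X` all basic open sets in `I` leaves a closed `I`-perfect set. -/
theorem exists_isClosed_idealPerfect [TopologicalSpace X] [SecondCountableTopology X]
    (hI : SigmaIdeal I) (h0 : ∅ ∈ I) (hX : univ ∉ I) : ∃ P, IsClosed P ∧ IdealPerfect I P := by
  obtain ⟨b, hbc, -, hb⟩ := exists_countable_basis X
  set W := ⋃₀ {V ∈ b | V ∈ I}
  have hWI : W ∈ I := hI.sUnion_mem h0 (hbc.mono fun V hV => hV.1) fun V hV => hV.2
  have hsubW : ∀ U, IsOpen U → U ∈ I → U ⊆ W := fun U hU hUI x hx => by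
    obtain ⟨V, hVb, hxV, hVU⟩ := hb.exists_subset_of_mem_open hx hU
    exact ⟨V, ⟨hVb, hI.1 V U hVU hUI⟩, hxV⟩
  refine ⟨Wᶜ, (isOpen_sUnion fun V hV => hb.isOpen hV.1).isClosed_compl,
    nonempty_iff_ne_empty.2 fun h => hX (compl_empty_iff.1 h ▸ hWI), fun U hU => ?_⟩
  refine or_iff_not_imp_right.2 fun hWU => ?_
  have hUI : U ∈ I := hI.1 U _ (fun x hx => (em (x ∈ W)).elim .inr fun h => .inl ⟨h, hx⟩)
    (hI.union_mem (not_not.1 hWU) hWI)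
  exact eq_empty_of_forall_notMem fun x hx => hx.1 (hsubW U hU hUI hx.2)

end SigmaIdeal

namespace IdealPerfect

variable {X : Type*} [TopologicalSpace X] {I : Set (Set X)} {P : Set X}

lemma isNowhereDense_preimage_val (hI : SigmaIdeal I) (hP : IdealPerfect I P) {C : Set X}
    (hC : IsClosed C) (hCI : C ∈ I) : IsNowhereDense ((↑) ⁻¹' C : Set P) := by
  rw [(hC.preimage continuous_subtype_val).isNowhereDense_iff]
  refine eq_empty_of_forall_notMem fun z hz => ?_
  obtain ⟨o, hoC, ho, hzo⟩ := mem_interior.1 hz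
  obtain ⟨V, hV, rfl⟩ := isOpen_induced_iff.1 ho
  have hPV : P ∩ V ∈ I := hI.1 _ C (fun x hx => hoC (show ⟨x, hx.1⟩ ∈ _ from hx.2)) hCI
  exact ((hP.2 V hV).resolve_right (not_not.2 hPV)).subset ⟨z.2, hzo⟩

lemma isMeagre_of_image_val_mem (hI : SigmaIdeal I) (hgen : GeneratedByClosedSets I)
    (hP : IdealPerfect I P) {s : Set P} (hs : (↑) '' s ∈ I) : IsMeagre s := by
  obtain ⟨C, hC, hsC⟩ := hgen _ hs
  refine (isMeagre_iUnion fun n =>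
    (hP.isNowhereDense_preimage_val hI (hC n).1 (hC n).2).isMeagre).mono fun z hz => ?_
  simpa using hsC (mem_image_of_mem _ hz)

end IdealPerfect

theorem exists_isGδ_notMem_forall_isOpen_preimage_val {X : Type*} [TopologicalSpace X]
    [PolishSpace X] {I : Set (Set X)} (hI : SigmaIdeal I) (hgen : GeneratedByClosedSets I)
    (hX : univ ∉ I) {ι : Type*} [Countable ι] {A : ι → Set X} (hA : ∀ i, AnalyticSet (A i)) :
    ∃ G, IsGδ G ∧ G ∉ I ∧ ∀ i, IsOpen ((↑) ⁻¹' A i : Set G) := by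
  by_cases h0 : ∅ ∈ I
  swap
  · exact ⟨∅, .empty, h0, fun i => by simp⟩
  obtain ⟨P, hPc, hP⟩ := hI.exists_isClosed_idealPerfect h0 hX
  have : PolishSpace P := hPc.polishSpace
  have : Nonempty P := hP.1.to_subtype
  obtain ⟨t, htGδ, htd, O, hO, htO⟩ := exists_isGδ_dense_forall_inter_eq_isOpen (α := P) fun i =>
    ((hA i).preimage continuous_subtype_val).baireMeasurableSet
  choose V hV hVO using fun i => isOpen_induced_iff.1 (hO i)
  refine ⟨(↑) '' t, hPc.isGδ.image_val htGδ, fun hGI => not_isMeagre_of_isGδ_of_dense htGδ htd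
    (hP.isMeagre_of_image_val_mem hI hgen hGI), fun i => ?_⟩
  have hGA : (↑) '' t ∩ A i = (↑) '' t ∩ V i := by
    rw [← image_inter_preimage, htO i, ← hVO i, image_inter_preimage]
  rw [Subtype.preimage_coe_eq_preimage_coe_iff.2 hGA]
  exact (hV i).preimage continuous_subtype_val

theorem analytic_multifunction_sigma03_measurable_restriction
    {X : Type*} [TopologicalSpace X] [PolishSpace X]
    (I : Set (Set X)) (hI : SigmaIdeal I) (hgen : GeneratedByClosedSets I)
    (hX : (Set.univ : Set X) ∉ I)
    (F : Set (X × (ℕ → ℕ))) (hF : MeasureTheory.AnalyticSet F) :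
    ∃ G : Set X, IsGδ G ∧ G ∉ I ∧
      ∀ U : Set (ℕ → ℕ), IsOpen U →
        ∃ S : ℕ → Set G, (∀ n, IsGδ (S n)) ∧
          {p : G | ∃ y ∈ U, ((p : X), y) ∈ F} = ⋃ n, S n := by
  obtain ⟨b, hbc, -, hb⟩ := exists_countable_basis (ℕ → ℕ)
  have : Countable b := hbc.to_subtype
  obtain ⟨G, hGδ, hGI, hG⟩ := exists_isGδ_notMem_forall_isOpen_preimage_val hI hgen hX
    (A := fun V : b => {x : X | ∃ y ∈ (V : Set (ℕ → ℕ)), (x, y) ∈ F})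
    fun V => hF.setOf_exists_mem (hb.isOpen V.2)
  -- the sets in question are even relatively open, so constant sequences `S` will do
  have hGU : ∀ U : Set (ℕ → ℕ), IsOpen U →
      IsOpen {p : G | ∃ y ∈ U, ((p : X), y) ∈ F} := fun U hU => by
    change IsOpen (((↑) : G → X) ⁻¹' {x | ∃ y ∈ U, (x, y) ∈ F})
    rw [setOf_exists_mem_eq_biUnion hb hU, preimage_iUnion₂]
    exact isOpen_biUnion fun V hV => hG ⟨V, hV.1⟩
  exact ⟨G, hGδ, hGI, fun U hU =>
    ⟨fun _ => _, fun _ => (hGU U hU).isGδ, (iUnion_const _).symm⟩⟩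
end

section
/- For any set A ⊆ 2^ω the following are equivalent: (a) A ∈ E; (b) there exists a function C assigning to each finite binary string σ of length n ≥ 1 a clopen set C(σ) ⊆ [σ] with μ(C(σ)) < 2^{-n}/n, such that for every x ∈ A there are at most finitely many n with x ∉ C(x↾n). (Condition (b) expresses that Eve has a winning strategy in the fusion game G_E(A).) -/
/-!
A closed null set `F` is the decreasing intersection of the clopen sets `prefixHull F m` of
sequences whose first `m` terms agree with those of a point of `F`, so by continuity from above
it has clopen neighbourhoods of arbitrarily small measure. Given a cover of `A` by closed null
sets `F k`, Eve answers `σ` of length `n` with `[σ]` meeting clopen neighbourhoods of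
`F 0, …, F n` whose measures sum to less than `2⁻ⁿ / n`; a point of `F k` is then caught at
every stage `n ≥ k`. Conversely, the union `D n` of Eve's answers at level `n` has measure at
most `2ⁿ · 2⁻ⁿ / n = 1 / n`, so each `⋂ n > M, D n` is a closed null set, and every point of `A`
lies in one of them.
-/

open Set

/-- The basic clopen set `[σ]` of all infinite binary sequences extending the finite
binary string `σ`. -/
def cylinder (σ : List Bool) : Set (ℕ → Bool) :=
  {x | ∀ i : Fin σ.length, x i = σ.get i}

open MeasureTheory Filter Topology
open scoped ENNReal

section PrefixHull

variable {α : Type*}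

def prefixHull (F : Set (ℕ → α)) (m : ℕ) : Set (ℕ → α) :=
  (fun x (i : Fin m) => x i) ⁻¹' ((fun x (i : Fin m) => x i) '' F)

lemma subset_prefixHull (F : Set (ℕ → α)) (m : ℕ) : F ⊆ prefixHull F m :=
  subset_preimage_image _ _

lemma antitone_prefixHull (F : Set (ℕ → α)) : Antitone (prefixHull F) := by
  rintro m₁ m₂ h x ⟨y, hy, hyx⟩
  exact ⟨y, hy, funext fun i => congrFun hyx (Fin.castLE h i)⟩

lemma isClopen_prefixHull [TopologicalSpace α] [DiscreteTopology α] (F : Set (ℕ → α)) (m : ℕ) :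
    IsClopen (prefixHull F m) :=
  (isClopen_discrete _).preimage (by fun_prop)

lemma iInter_prefixHull [TopologicalSpace α] {F : Set (ℕ → α)} (hF : IsClosed F) :
    ⋂ m, prefixHull F m = F := by
  refine (subset_iInter (subset_prefixHull F)).antisymm' fun x hx => ?_
  choose y hyF hyx using mem_iInter.1 hx
  have hy : Tendsto y atTop (𝓝 x) := by
    refine tendsto_pi_nhds.2 fun i => tendsto_const_nhds.congr' ?_
    filter_upwards [eventually_gt_atTop i] with m hm
    exact (congrFun (hyx m) ⟨i, hm⟩).symm
  exact hF.mem_of_tendsto hy (Eventually.of_forall hyF)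

lemma exists_isClopen_superset_measure_lt [TopologicalSpace α] [DiscreteTopology α]
    [MeasurableSpace α] [OpensMeasurableSpace (ℕ → α)] (μ : Measure (ℕ → α)) [IsFiniteMeasure μ]
    {F : Set (ℕ → α)} (hF : IsClosed F) (hF0 : μ F = 0) {ε : ℝ≥0∞} (hε : 0 < ε) :
    ∃ U, IsClopen U ∧ F ⊆ U ∧ μ U < ε := by
  have hlim := tendsto_measure_iInter_atTop (μ := μ)
    (fun m => (isClopen_prefixHull F m).isOpen.measurableSet.nullMeasurableSet)
    (antitone_prefixHull F) ⟨0, measure_ne_top μ _⟩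
  rw [iInter_prefixHull hF, hF0] at hlim
  obtain ⟨m, hm⟩ := (hlim.eventually_lt_const hε).exists
  exact ⟨prefixHull F m, isClopen_prefixHull F m, subset_prefixHull F m, hm⟩

end PrefixHull

lemma cylinder_nil : cylinder [] = univ :=
  eq_univ_of_forall fun _ i => i.elim0

lemma isClopen_cylinder (σ : List Bool) : IsClopen (cylinder σ) := by
  have h : cylinder σ = (fun x (i : Fin σ.length) => x i) ⁻¹' {σ.get} := by
    ext x
    simp [_root_.cylinder, funext_iff]
  rw [h]
  exact (isClopen_discrete _).preimage (by fun_prop)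

lemma mem_cylinder_ofFn (x : ℕ → Bool) (n : ℕ) : x ∈ cylinder (List.ofFn fun i : Fin n => x i) :=
  fun i => by simp

theorem exists_clopen_strategy_of_subset_iUnion {μ : Measure (ℕ → Bool)} [IsFiniteMeasure μ]
    {b : ℕ → ℝ≥0∞} (hb : ∀ n, b n ≠ 0) {F : ℕ → Set (ℕ → Bool)} (hF : ∀ k, IsClosed (F k))
    (hF0 : ∀ k, μ (F k) = 0) {A : Set (ℕ → Bool)} (hA : A ⊆ ⋃ k, F k) :
    ∃ C : List Bool → Set (ℕ → Bool),
      (∀ σ, IsClopen (C σ) ∧ C σ ⊆ cylinder σ ∧ μ (C σ) < b σ.length) ∧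
      ∀ x ∈ A, {n : ℕ | x ∉ C (List.ofFn fun i : Fin n => x i)}.Finite := by
  choose ε hε0 hε using fun n => ENNReal.exists_pos_sum_of_countable' (hb n) ℕ
  choose U hU hFU hUε using fun n k =>
    exists_isClopen_superset_measure_lt μ (hF k) (hF0 k) (hε0 n k)
  refine ⟨fun σ => cylinder σ ∩ ⋃ k ∈ Finset.range (σ.length + 1), U σ.length k,
    fun σ => ⟨?_, inter_subset_left, ?_⟩, fun x hx => ?_⟩
  · exact (isClopen_cylinder σ).inter (isClopen_biUnion_finset fun k _ => hU _ k)
  · calc μ (cylinder σ ∩ ⋃ k ∈ Finset.range (σ.length + 1), U σ.length k)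
        ≤ μ (⋃ k ∈ Finset.range (σ.length + 1), U σ.length k) := measure_mono inter_subset_right
      _ ≤ ∑ k ∈ Finset.range (σ.length + 1), μ (U σ.length k) := measure_biUnion_finset_le _ _
      _ ≤ ∑ k ∈ Finset.range (σ.length + 1), ε σ.length k :=
          Finset.sum_le_sum fun k _ => (hUε _ k).le
      _ ≤ ∑' k, ε σ.length k := ENNReal.sum_le_tsum _
      _ < b σ.length := hε _
  · obtain ⟨k, hk⟩ := mem_iUnion.1 (hA hx)
    refine (finite_Iio k).subset fun n hn => mem_Iio.2 <| not_le.1 fun hkn => hn ⟨mem_cylinder_ofFn x n, ?_⟩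
    rw [List.length_ofFn]
    exact mem_biUnion (by simpa [Nat.lt_succ_iff] using hkn) (hFU n k hk)

theorem exists_closed_null_cover_of_strategy {μ : Measure (ℕ → Bool)} {b : ℕ → ℝ≥0∞}
    (hb : Tendsto (fun n => 2 ^ n * b n) atTop (𝓝 0)) {C : List Bool → Set (ℕ → Bool)}
    (hC : ∀ σ : List Bool, 1 ≤ σ.length → IsClosed (C σ) ∧ μ (C σ) ≤ b σ.length)
    {A : Set (ℕ → Bool)}
    (hA : ∀ x ∈ A, {n : ℕ | 0 < n ∧ x ∉ C (List.ofFn fun i : Fin n => x i)}.Finite) :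
    ∃ f : ℕ → Set (ℕ → Bool), (∀ n, IsClosed (f n) ∧ μ (f n) = 0) ∧ A ⊆ ⋃ n, f n := by
  set D : ℕ → Set (ℕ → Bool) := fun n => ⋃ v : Fin n → Bool, C (List.ofFn v)
  have hC' : ∀ n, 1 ≤ n → ∀ v : Fin n → Bool,
      IsClosed (C (List.ofFn v)) ∧ μ (C (List.ofFn v)) ≤ b n := fun n hn v => by
    simpa using hC (List.ofFn v) (by simpa using hn)
  have hD_le : ∀ n, 1 ≤ n → μ (D n) ≤ 2 ^ n * b n := fun n hn =>
    calc μ (D n) ≤ ∑ v : Fin n → Bool, μ (C (List.ofFn v)) := measure_iUnion_fintype_le _ _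
      _ ≤ ∑ _v : Fin n → Bool, b n := Finset.sum_le_sum fun v _ => (hC' n hn v).2
      _ = 2 ^ n * b n := by simp [Finset.card_univ]
  refine ⟨fun M => ⋂ n ≥ M + 1, D n, fun M => ⟨?_, ?_⟩, fun x hx => ?_⟩
  · exact isClosed_iInter fun n => isClosed_iInter fun hn =>
      isClosed_iUnion_of_finite fun v => (hC' n (by omega) v).1
  · refine nonpos_iff_eq_zero.1 (ge_of_tendsto hb (eventually_atTop.2 ⟨M + 1, fun n hn => ?_⟩))
    exact (measure_mono (biInter_subset_of_mem hn)).trans (hD_le n (by omega))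
  · obtain ⟨M, hM⟩ := (hA x hx).bddAbove
    refine mem_iUnion.2 ⟨M, mem_iInter₂.2 fun n hn => mem_iUnion.2 ⟨fun i => x i, ?_⟩⟩
    by_contra hxn
    have := hM ⟨by omega, hxn⟩
    omega

lemma two_pow_mul_inv_two_pow_div (n : ℕ) : (2 : ℝ≥0∞) ^ n * (2⁻¹ ^ n / n) = (n : ℝ≥0∞)⁻¹ := by
  rw [← mul_div_assoc, ← mul_pow, ENNReal.mul_inv_cancel two_ne_zero ENNReal.ofNat_ne_top,
    one_pow, one_div]

/-- Characterization of the σ-ideal `E` generated by closed null sets in the Cantor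
space via Eve's winning strategies in the fusion game `G_E(A)`.  Here `μ` is the
fair-coin product measure on `2^ω`, characterized by its values on basic clopen sets. -/
theorem mem_closed_null_ideal_iff_strategy
    (μ : MeasureTheory.Measure (ℕ → Bool))
    (hμ : ∀ σ : List Bool, μ (cylinder σ) = (2 : ENNReal)⁻¹ ^ σ.length)
    (A : Set (ℕ → Bool)) :
    (∃ f : ℕ → Set (ℕ → Bool), (∀ n, IsClosed (f n) ∧ μ (f n) = 0) ∧ A ⊆ ⋃ n, f n) ↔
      ∃ C : List Bool → Set (ℕ → Bool),
        (∀ σ : List Bool, 1 ≤ σ.length →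
          IsClopen (C σ) ∧ C σ ⊆ cylinder σ ∧
            μ (C σ) < (2 : ENNReal)⁻¹ ^ σ.length / (σ.length : ENNReal)) ∧
        ∀ x ∈ A, {n : ℕ | 0 < n ∧ x ∉ C (List.ofFn fun i : Fin n => x i)}.Finite := by
  have : IsFiniteMeasure μ := ⟨by simp [← cylinder_nil, hμ]⟩
  constructor
  · rintro ⟨f, hf, hA⟩
    have hb : ∀ n : ℕ, (2 : ℝ≥0∞)⁻¹ ^ n / n ≠ 0 := fun n => by simp [ENNReal.div_eq_zero_iff]
    obtain ⟨C, hC, hAC⟩ :=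
      exists_clopen_strategy_of_subset_iUnion hb (fun k => (hf k).1) (fun k => (hf k).2) hA
    exact ⟨C, fun σ _ => hC σ, fun x hx => (hAC x hx).subset fun n hn => hn.2⟩
  · rintro ⟨C, hC, hA⟩
    refine exists_closed_null_cover_of_strategy (b := fun n => 2⁻¹ ^ n / n) ?_
      (fun σ hσ => ⟨(hC σ hσ).1.isClosed, (hC σ hσ).2.2.le⟩) hA
    simpa only [two_pow_mul_inv_two_pow_div] using ENNReal.tendsto_inv_nat_nhds_zero
end

section
/- Let X be a Polish space, let f : X → ω^ω be a function of Baire class 1 (the preimage under f of every open set is Fσ), and let G ⊆ X be any set. If F ⊆ X is closed and F ∩ G ∉ I^f, then there exist a point x ∈ F and a clopen set U ⊆ ω^ω with f(x) ∈ U such that for every open neighborhood V of x, (V \ f⁻¹[U]) ∩ G ∉ I^f. -/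
/-!
Suppose the conclusion fails. Then for every clopen `U ∋ f x` with `x ∈ F`, the point `x`
lies in the open set `W_U` of points near which `G \ f⁻¹' U` is in `I^f`; by second
countability, `W_U ∩ (G \ f⁻¹' U) ∈ I^f`. Apply this to the countably many clopen sets
`{τ | τ i = n}` and their complements. Off a null set, a point of `F ∩ G` lies in `W_U`
exactly when `f x ∈ U`, so it lies in the closed set `T` of points of `F` belonging to at
most one of `W_U`, `W_Uᶜ` for each such `U`. On `T` the preimage of each `{τ | τ i = n}`
is the relatively open set `T ∩ W_U`, so `f` is continuous on `T`, and `F ∩ G ∈ I^f`.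
-/

open Set

/-- `f` is of Baire class 1: the preimage of every open set is `Fσ`. -/
def BaireClassOne {X : Type*} [TopologicalSpace X] (f : X → (ℕ → ℕ)) : Prop :=
  ∀ U : Set (ℕ → ℕ), IsOpen U →
    ∃ F : ℕ → Set X, (∀ n, IsClosed (F n)) ∧ f ⁻¹' U = ⋃ n, F n

/-- The σ-ideal `I^f` generated by the closed sets on which `f` is continuous:
`A ∈ I^f` iff `A` is covered by countably many closed sets on which `f` restricts
to a continuous function. -/
def contIdeal {X : Type*} [TopologicalSpace X] (f : X → (ℕ → ℕ)) : Set (Set X) :=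
  {A | ∃ C : ℕ → Set X, (∀ n, IsClosed (C n) ∧ ContinuousOn f (C n)) ∧ A ⊆ ⋃ n, C n}

section ContIdeal

variable {X : Type*} [TopologicalSpace X] {f : X → (ℕ → ℕ)}

lemma contIdeal_mono {A B : Set X} (h : A ⊆ B) (hB : B ∈ contIdeal f) : A ∈ contIdeal f :=
  let ⟨C, hC, hBC⟩ := hB
  ⟨C, hC, h.trans hBC⟩

lemma mem_contIdeal_of_continuousOn {C : Set X} (hC : IsClosed C) (hf : ContinuousOn f C) :
    C ∈ contIdeal f :=
  ⟨fun _ => C, fun _ => ⟨hC, hf⟩, subset_iUnion (fun _ : ℕ => C) 0⟩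

lemma contIdeal_iUnion {ι : Type*} [Countable ι] {A : ι → Set X}
    (h : ∀ i, A i ∈ contIdeal f) : (⋃ i, A i) ∈ contIdeal f := by
  cases isEmpty_or_nonempty ι with
  | inl hι =>
    simpa using mem_contIdeal_of_continuousOn (f := f) isClosed_empty (continuousOn_empty f)
  | inr hι =>
    choose C hC hAC using h
    obtain ⟨e, he⟩ := exists_surjective_nat (ι × ℕ)
    refine ⟨fun m => C (e m).1 (e m).2, fun m => hC _ _, iUnion_subset fun i x hx => ?_⟩
    obtain ⟨n, hn⟩ := mem_iUnion.1 (hAC i hx)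
    obtain ⟨m, hm⟩ := he (i, n)
    exact mem_iUnion.2 ⟨m, by rwa [hm]⟩

lemma contIdeal_union {A B : Set X} (hA : A ∈ contIdeal f) (hB : B ∈ contIdeal f) :
    A ∪ B ∈ contIdeal f := by
  rw [union_eq_iUnion]
  exact contIdeal_iUnion fun b => by cases b <;> assumption

variable (f) in
/-- The largest open set meeting `A` in a set of `I^f`, when `X` is second countable. -/
def nullOpen (A : Set X) : Set X :=
  ⋃₀ {V | IsOpen V ∧ V ∩ A ∈ contIdeal f}

lemma isOpen_nullOpen (A : Set X) : IsOpen (nullOpen f A) :=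
  isOpen_sUnion fun _ hV => hV.1

lemma mem_nullOpen {A V : Set X} {x : X} (hV : IsOpen V) (hx : x ∈ V)
    (hVA : V ∩ A ∈ contIdeal f) : x ∈ nullOpen f A :=
  mem_sUnion.2 ⟨V, ⟨hV, hVA⟩, hx⟩

lemma nullOpen_inter_mem_contIdeal [SecondCountableTopology X] (A : Set X) :
    nullOpen f A ∩ A ∈ contIdeal f := by
  obtain ⟨S, hS, hSsub, hSeq⟩ :=
    TopologicalSpace.isOpen_sUnion_countable {V | IsOpen V ∧ V ∩ A ∈ contIdeal f}
      fun _ hV => hV.1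
  have := hS.to_subtype
  rw [nullOpen, ← hSeq, sUnion_eq_iUnion, iUnion_inter]
  exact contIdeal_iUnion fun V => (hSsub V.2).2

end ContIdeal

lemma continuousOn_of_forall_apply_eq_iff_mem {X : Type*} [TopologicalSpace X]
    {f : X → (ℕ → ℕ)} {T : Set X} (W : ℕ → ℕ → Set X) (hW : ∀ i n, IsOpen (W i n))
    (h : ∀ x ∈ T, ∀ i n, f x i = n ↔ x ∈ W i n) : ContinuousOn f T := by
  refine continuousOn_pi.2 fun i x hx => ?_
  rw [ContinuousWithinAt, nhds_discrete, Filter.tendsto_pure]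
  filter_upwards [mem_nhdsWithin_of_mem_nhds ((hW i (f x i)).mem_nhds ((h x hx i _).1 rfl)),
    self_mem_nhdsWithin] with z hzW hzT
  exact (h z hzT i _).2 hzW

lemma inter_mem_contIdeal_of_forall_isClopen {X : Type*} [TopologicalSpace X]
    [SecondCountableTopology X] {f : X → (ℕ → ℕ)} {F G : Set X} (hF : IsClosed F)
    (h : ∀ x ∈ F, ∀ U, IsClopen U → f x ∈ U → x ∈ nullOpen f (G \ f ⁻¹' U)) :
    F ∩ G ∈ contIdeal f := by
  set S : ℕ → ℕ → Set (ℕ → ℕ) := fun i n => {τ | τ i = n}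
  have hS : ∀ i n, IsClopen (S i n) := fun i n =>
    (isClopen_discrete {n}).preimage (continuous_apply i)
  set W : ℕ → ℕ → Set X := fun i n => nullOpen f (G \ f ⁻¹' S i n)
  set W' : ℕ → ℕ → Set X := fun i n => nullOpen f (G \ f ⁻¹' (S i n)ᶜ)
  set T : Set X := F ∩ ⋂ i, ⋂ n, (W i n ∩ W' i n)ᶜ
  set N : Set X :=
    ⋃ i, ⋃ n, (W i n ∩ (G \ f ⁻¹' S i n)) ∪ (W' i n ∩ (G \ f ⁻¹' (S i n)ᶜ))
  have hN : N ∈ contIdeal f := contIdeal_iUnion fun i => contIdeal_iUnion fun n =>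
    contIdeal_union (nullOpen_inter_mem_contIdeal _) (nullOpen_inter_mem_contIdeal _)
  have hT_closed : IsClosed T := hF.inter <| isClosed_iInter fun i => isClosed_iInter fun n =>
    ((isOpen_nullOpen _).inter (isOpen_nullOpen _)).isClosed_compl
  have hT_cont : ContinuousOn f T := by
    refine continuousOn_of_forall_apply_eq_iff_mem W (fun i n => isOpen_nullOpen _) ?_
    rintro x ⟨hxF, hxT⟩ i n
    refine ⟨fun hx => h x hxF _ (hS i n) hx, fun hxW => ?_⟩
    by_contra hne
    exact mem_iInter₂.1 hxT i n ⟨hxW, h x hxF _ (hS i n).compl hne⟩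
  have hcover : F ∩ G ⊆ T ∪ N := by
    rintro x ⟨hxF, hxG⟩
    by_cases hxN : x ∈ N
    · exact Or.inr hxN
    refine Or.inl ⟨hxF, mem_iInter₂.2 fun i n ⟨hxW, hxW'⟩ => hxN (mem_iUnion₂.2 ⟨i, n, ?_⟩)⟩
    by_cases hx : f x i = n
    · exact Or.inr ⟨hxW', hxG, not_not.2 hx⟩
    · exact Or.inl ⟨hxW, hxG, hx⟩
  exact contIdeal_mono hcover <|
    contIdeal_union (mem_contIdeal_of_continuousOn hT_closed hT_cont) hN

theorem exists_point_clopen_positive_off_preimage_general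
    {X : Type*} [TopologicalSpace X] [PolishSpace X]
    (f : X → (ℕ → ℕ)) (G : Set X)
    (F : Set X) (hF : IsClosed F) (hFG : F ∩ G ∉ contIdeal f) :
    ∃ x ∈ F, ∃ U : Set (ℕ → ℕ), IsClopen U ∧ f x ∈ U ∧
      ∀ V : Set X, IsOpen V → x ∈ V → (V \ f ⁻¹' U) ∩ G ∉ contIdeal f := by
  by_contra! h
  refine hFG (inter_mem_contIdeal_of_forall_isClopen hF fun x hx U hU hxU => ?_)
  obtain ⟨V, hV, hxV, hVU⟩ := h x hx U hU hxU
  exact mem_nullOpen hV hxV (by rwa [← inter_sdiff_assoc, inter_sdiff_right_comm])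

theorem exists_point_clopen_positive_off_preimage
    {X : Type*} [TopologicalSpace X] [PolishSpace X]
    (f : X → (ℕ → ℕ)) (hf : BaireClassOne f) (G : Set X)
    (F : Set X) (hF : IsClosed F) (hFG : F ∩ G ∉ contIdeal f) :
    ∃ x ∈ F, ∃ U : Set (ℕ → ℕ), IsClopen U ∧ f x ∈ U ∧
      ∀ V : Set X, IsOpen V → x ∈ V → (V \ f ⁻¹' U) ∩ G ∉ contIdeal f :=
  exists_point_clopen_positive_off_preimage_general f G F hF hFG
end
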